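/- Let (V,H) and (V',H') be decompositions of an m×n₁ diagram C and an m×n₂ diagram C', respectively, and let (V'',H'') = (V,H) ⋆ (V',H') be the induced decomposition of C ⋆ C'. Then f(V'',H'') = f(V,H) · f(V',H') in Ex_m. -/

import Mathlib

open Finset

/-- The excess group `Ex_m`: triples `(v, h, ε)` with `v, h ∈ (ℤ/2ℤ)^m`,
`ε ∈ {±1}` (realized as `ℤˣ`), and the coordinates of `v` summing to `0`. -/
@[ext]
structure Ex (m : ℕ) where
  v : Fin m → ZMod 2
  h : Fin m → ZMod 2
  ε : ℤˣ
  hv : ∑ i, v i = 0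

namespace Ex

variable {m : ℕ}

/-- The exponent of `(−1)` in the product `(v,h,ε)·(v',h',ε')`:
`Σ_{1≤i<j≤m} v_j (v'_i + h'_i) + Σ_{1≤i≤j≤m} v'_j h_i`, computed from the
representatives in `{0,1}` of the `ℤ/2ℤ`-coordinates. -/
def expo (x y : Ex m) : ℕ :=
  (∑ p ∈ Finset.univ.filter (fun p : Fin m × Fin m => p.1 < p.2),
      (x.v p.2).val * ((y.v p.1).val + (y.h p.1).val)) +
  ∑ p ∈ Finset.univ.filter (fun p : Fin m × Fin m => p.1 ≤ p.2),
      (y.v p.2).val * (x.h p.1).val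

/-- The multiplication of `Ex_m`:
`(v,h,ε)·(v',h',ε') = (v+v', h+h', ε ε' (−1)^{Σ_{i<j} v_j(v'_i+h'_i) + Σ_{i≤j} v'_j h_i})`. -/
def mul' (x y : Ex m) : Ex m :=
  ⟨x.v + y.v, x.h + y.h, x.ε * y.ε * (-1) ^ expo x y, by
    simp [Finset.sum_add_distrib, x.hv, y.hv]⟩

/-- The identity element `(0, 0, +1)` of `Ex_m`. -/
def one' : Ex m := ⟨0, 0, 1, by simp⟩

/-- The element `(0, 0, −1)` of `Ex_m`. -/
def negOne' : Ex m := ⟨0, 0, -1, by simp⟩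

/-- Inversion in `Ex_m`. -/
def inv' (x : Ex m) : Ex m := ⟨x.v, x.h, x.ε * (-1) ^ expo x x, x.hv⟩

-- auxiliary: the ZMod-2-valued bilinear form underlying `expo`
private def Bf (a b c d : Fin m → ZMod 2) : ZMod 2 :=
  (∑ p ∈ Finset.univ.filter (fun p : Fin m × Fin m => p.1 < p.2),
      a p.2 * (c p.1 + d p.1)) +
  ∑ p ∈ Finset.univ.filter (fun p : Fin m × Fin m => p.1 ≤ p.2),
      c p.2 * b p.1

private def χ (a : ZMod 2) : ℤˣ := (-1) ^ a.val

private lemma χ_add : ∀ a b : ZMod 2, χ (a + b) = χ a * χ b := by decide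

private lemma val_cast : ∀ a : ZMod 2, ((a.val : ℕ) : ZMod 2) = a := by decide

private lemma neg_one_pow_nat (s : ℕ) : ((-1 : ℤˣ)) ^ s = χ ((s : ZMod 2)) := by
  induction s with
  | zero => simp [χ]
  | succ k ih =>
      rw [pow_succ, ih]
      have hc : ((k + 1 : ℕ) : ZMod 2) = ((k : ℕ) : ZMod 2) + 1 := by push_cast; ring
      have hx : ∀ a : ZMod 2, χ (a + 1) = χ a * (-1) := by decide
      rw [hc, hx]

private lemma expo_cast (x y : Ex m) :
    ((expo x y : ℕ) : ZMod 2) = Bf x.v x.h y.v y.h := by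
  unfold expo Bf
  push_cast
  simp [val_cast]

private lemma sign_eq (x y : Ex m) :
    ((-1 : ℤˣ)) ^ expo x y = χ (Bf x.v x.h y.v y.h) := by
  rw [neg_one_pow_nat, expo_cast]

private lemma Bf_add_left (a b a' b' c d : Fin m → ZMod 2) :
    Bf (a + a') (b + b') c d = Bf a b c d + Bf a' b' c d := by
  unfold Bf
  simp only [Pi.add_apply, add_mul, mul_add, Finset.sum_add_distrib]
  ring

private lemma Bf_add_right (a b c d c' d' : Fin m → ZMod 2) :
    Bf a b (c + c') (d + d') = Bf a b c d + Bf a b c' d' := by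
  unfold Bf
  simp only [Pi.add_apply, add_mul, mul_add, Finset.sum_add_distrib]
  ring

private lemma Bf_zero_left (c d : Fin m → ZMod 2) : Bf 0 0 c d = 0 := by
  unfold Bf; simp

private lemma Bf_zero_right (a b : Fin m → ZMod 2) : Bf a b 0 0 = 0 := by
  unfold Bf; simp

instance : Group (Ex m) where
  mul := mul'
  one := one'
  inv := inv'
  mul_assoc a b c := by
    refine Ex.ext ?_ ?_ ?_
    · show (a.v + b.v) + c.v = a.v + (b.v + c.v)
      exact add_assoc _ _ _
    · show (a.h + b.h) + c.h = a.h + (b.h + c.h)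
      exact add_assoc _ _ _
    · show (a.ε * b.ε * (-1) ^ expo a b) * c.ε * (-1) ^ expo (mul' a b) c =
        a.ε * (b.ε * c.ε * (-1) ^ expo b c) * (-1) ^ expo a (mul' b c)
      rw [sign_eq, sign_eq, sign_eq, sign_eq]
      have h1 : (mul' a b).v = a.v + b.v := rfl
      have h2 : (mul' a b).h = a.h + b.h := rfl
      have h3 : (mul' b c).v = b.v + c.v := rfl
      have h4 : (mul' b c).h = b.h + c.h := rfl
      rw [h1, h2, h3, h4, Bf_add_left, Bf_add_right, χ_add, χ_add]
      simp only [mul_assoc, mul_comm, mul_left_comm]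
  one_mul a := by
    refine Ex.ext ?_ ?_ ?_
    · show 0 + a.v = a.v
      exact zero_add _
    · show 0 + a.h = a.h
      exact zero_add _
    · show 1 * a.ε * (-1) ^ expo (one' : Ex m) a = a.ε
      have h0 : expo (one' : Ex m) a = 0 := by simp [expo, one']
      rw [h0]; simp
  mul_one a := by
    refine Ex.ext ?_ ?_ ?_
    · show a.v + 0 = a.v
      exact add_zero _
    · show a.h + 0 = a.h
      exact add_zero _
    · show a.ε * 1 * (-1) ^ expo a (one' : Ex m) = a.ε
      have h0 : expo a (one' : Ex m) = 0 := by simp [expo, one']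
      rw [h0]; simp
  inv_mul_cancel a := by
    refine Ex.ext ?_ ?_ ?_
    · show a.v + a.v = 0
      funext i
      exact CharTwo.add_self_eq_zero _
    · show a.h + a.h = 0
      funext i
      exact CharTwo.add_self_eq_zero _
    · show (a.ε * (-1) ^ expo a a) * a.ε * (-1) ^ expo (inv' a) a = 1
      have he : expo (inv' a) a = expo a a := rfl
      rw [he]
      have h1 : a.ε * a.ε = 1 := Int.units_mul_self a.ε
      have h2 : ((-1 : ℤˣ)) ^ expo a a * (-1) ^ expo a a = 1 :=
        Int.units_mul_self _
      calc (a.ε * (-1) ^ expo a a) * a.ε * (-1) ^ expo a a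
          = (a.ε * a.ε) * ((-1) ^ expo a a * (-1) ^ expo a a) := by
            simp only [mul_assoc, mul_comm, mul_left_comm]
        _ = 1 := by rw [h1, h2, one_mul]

lemma mul_def (x y : Ex m) : x * y = mul' x y := rfl
lemma one_def : (1 : Ex m) = one' := rfl

end Ex

open Finset

/-- An `m × n` diagram: each square is black or white (`true` = white). -/
abbrev Diagram (m n : ℕ) := Fin m → Fin n → Bool

/-- The finite set of white squares of a diagram. -/
def whites {m n : ℕ} (D : Diagram m n) : Finset (Fin m × Fin n) :=
  Finset.univ.filter fun p => D p.1 p.2 = true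

/-- Reading order (strict): row-by-row from top to bottom, left to right in each
row; this is the order of the labels of the white squares. -/
def rlt {m n : ℕ} (p q : Fin m × Fin n) : Prop :=
  p.1 < q.1 ∨ (p.1 = q.1 ∧ p.2 < q.2)

instance {m n : ℕ} : DecidableRel (@rlt m n) := fun _ _ => by unfold rlt; infer_instance

/-- The excess of a set `S` of squares: the vector in `(ℤ/2ℤ)^m` whose `i`-th
coordinate is the number of elements of `S` in row `i`, reduced mod 2. -/
def excess {m n : ℕ} (S : Finset (Fin m × Fin n)) : Fin m → ZMod 2 :=
  fun i => ((S.filter fun p => p.1 = i).card : ZMod 2)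

/-- `(V, H)` is a decomposition of the diagram `D`: `V` and `H` are disjoint,
their union is the set of white squares of `D`, and every column of `D` contains
an even number of elements of `V`. -/
def IsDecomp {m n : ℕ} (D : Diagram m n) (V H : Finset (Fin m × Fin n)) : Prop :=
  Disjoint V H ∧ V ∪ H = whites D ∧
    ∀ j : Fin n, Even ((V.filter fun p => p.2 = j).card)

/-- `inv(V)`: the number of pairs `(p, q) ∈ V × V` with `p` before `q` in reading
order (i.e. with smaller label) and `q` strictly below and strictly to the left
of `p`. -/
def invV {m n : ℕ} (V : Finset (Fin m × Fin n)) : ℕ :=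
  ((V ×ˢ V).filter fun pq =>
    rlt pq.1 pq.2 ∧ pq.1.1 < pq.2.1 ∧ pq.2.2 < pq.1.2).card

/-- `inv(V|H)`: the number of pairs `(p, q)` with `p ∈ H`, `q ∈ V` and `p` before
`q` in reading order (i.e. with smaller label). -/
def invMix {m n : ℕ} (V H : Finset (Fin m × Fin n)) : ℕ :=
  ((H ×ˢ V).filter fun pq => rlt pq.1 pq.2).card

/-- The signature `sgn(V,H) = (−1)^{inv(V) + inv(V|H)}` of a decomposition,
as a sign in `ℤˣ`. -/
def sgnVH {m n : ℕ} (V H : Finset (Fin m × Fin n)) : ℤˣ :=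
  (-1) ^ (invV V + invMix V H)

/-- The element `f(V,H) = (excess(V), excess(H), sgn(V,H))` of `Ex_m` attached to
a decomposition `(V,H)`; the proof that the coordinates of `excess(V)` sum to
zero (automatic for decompositions) is supplied as an argument. -/
def fEx {m n : ℕ} (V H : Finset (Fin m × Fin n))
    (hV : ∑ i, excess V i = 0) : Ex m :=
  ⟨excess V, excess H, sgnVH V H, hV⟩

/-- Concatenation of diagrams: `hcat D D'` places `D'` immediately to the right
of `D`. -/
def hcat {m n₁ n₂ : ℕ} (D : Diagram m n₁) (D' : Diagram m n₂) :
    Diagram m (n₁ + n₂) :=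
  fun i j => Fin.addCases (fun j₁ => D i j₁) (fun j₂ => D' i j₂) j

/-- The squares of the left factor, viewed inside the concatenated diagram. -/
def leftSq {m n₁ : ℕ} (n₂ : ℕ) (p : Fin m × Fin n₁) : Fin m × Fin (n₁ + n₂) :=
  (p.1, Fin.castAdd n₂ p.2)

/-- The squares of the right factor, viewed inside the concatenated diagram. -/
def rightSq {m n₂ : ℕ} (n₁ : ℕ) (p : Fin m × Fin n₂) : Fin m × Fin (n₁ + n₂) :=
  (p.1, Fin.natAdd n₁ p.2)

/-- The part of an induced decomposition of a concatenation coming from parts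
`S` (of the left diagram) and `S'` (of the right diagram). -/
def starPart {m n₁ n₂ : ℕ} (S : Finset (Fin m × Fin n₁))
    (S' : Finset (Fin m × Fin n₂)) : Finset (Fin m × Fin (n₁ + n₂)) :=
  S.image (leftSq n₂) ∪ S'.image (rightSq n₁)

/-!
Concatenation splits the pairs of white squares of `C ⋆ C'` into four blocks. The two pure
blocks reproduce the inversion counts of the factors; in the mixed blocks a square of `C` lies
strictly to the left of every square of `C'`, so reading order and the inversion condition
only compare rows. Mod 2, the number of mixed pairs whose rows satisfy a relation `r` is
`∑_{r i j} excess_i · excess'_j`, and these sums add up to the cocycle in the product of `Ex_m`.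
-/

section Concatenation

variable {m n₁ n₂ : ℕ}

lemma leftSq_injective : Function.Injective (leftSq (m := m) (n₁ := n₁) n₂) :=
  fun _ _ h => Prod.ext (Prod.ext_iff.1 h).1 (Fin.castAdd_injective n₁ n₂ (Prod.ext_iff.1 h).2)

lemma rightSq_injective : Function.Injective (rightSq (m := m) (n₂ := n₂) n₁) :=
  fun _ _ h => Prod.ext (Prod.ext_iff.1 h).1 (Fin.natAdd_injective n₂ n₁ (Prod.ext_iff.1 h).2)

lemma disjoint_image_leftSq_image_rightSq (S : Finset (Fin m × Fin n₁))
    (S' : Finset (Fin m × Fin n₂)) :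
    Disjoint (S.image (leftSq n₂)) (S'.image (rightSq n₁)) := by
  simp only [disjoint_left, mem_image, not_exists, not_and]
  rintro _ ⟨p, -, rfl⟩ q - h
  have := congrArg (fun x : Fin m × Fin (n₁ + n₂) => (x.2 : ℕ)) h
  simp only [leftSq, rightSq, Fin.val_castAdd, Fin.val_natAdd] at this
  omega

lemma sum_starPart {M : Type*} [AddCommMonoid M] (S : Finset (Fin m × Fin n₁))
    (S' : Finset (Fin m × Fin n₂)) (φ : Fin m × Fin (n₁ + n₂) → M) :
    ∑ p ∈ starPart S S', φ p = ∑ p ∈ S, φ (leftSq n₂ p) + ∑ p ∈ S', φ (rightSq n₁ p) := by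
  rw [starPart, sum_union (disjoint_image_leftSq_image_rightSq S S'),
    sum_image leftSq_injective.injOn, sum_image rightSq_injective.injOn]

lemma excess_starPart (S : Finset (Fin m × Fin n₁)) (S' : Finset (Fin m × Fin n₂)) :
    excess (starPart S S') = excess S + excess S' := by
  funext i
  simp only [excess, card_filter, sum_starPart, Pi.add_apply, Nat.cast_add]
  rfl

lemma card_filter_starPart_product (X Y : Finset (Fin m × Fin n₁))
    (X' Y' : Finset (Fin m × Fin n₂))
    (P : (Fin m × Fin (n₁ + n₂)) × (Fin m × Fin (n₁ + n₂)) → Prop) [DecidablePred P] :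
    #((starPart X X' ×ˢ starPart Y Y').filter P)
      = #((X ×ˢ Y).filter fun pq => P (leftSq n₂ pq.1, leftSq n₂ pq.2))
      + #((X ×ˢ Y').filter fun pq => P (leftSq n₂ pq.1, rightSq n₁ pq.2))
      + #((X' ×ˢ Y).filter fun pq => P (rightSq n₁ pq.1, leftSq n₂ pq.2))
      + #((X' ×ˢ Y').filter fun pq => P (rightSq n₁ pq.1, rightSq n₁ pq.2)) := by
  simp only [card_filter, sum_product, sum_starPart, sum_add_distrib]
  abel

@[simp] lemma leftSq_fst (p : Fin m × Fin n₁) : (leftSq n₂ p).1 = p.1 := rfl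

@[simp] lemma rightSq_fst (p : Fin m × Fin n₂) : (rightSq n₁ p).1 = p.1 := rfl

@[simp] lemma leftSq_snd_lt_leftSq_snd {p q : Fin m × Fin n₁} :
    (leftSq n₂ p).2 < (leftSq n₂ q).2 ↔ p.2 < q.2 := by
  simp only [leftSq, Fin.lt_def, Fin.val_castAdd]

@[simp] lemma rightSq_snd_lt_rightSq_snd {p q : Fin m × Fin n₂} :
    (rightSq n₁ p).2 < (rightSq n₁ q).2 ↔ p.2 < q.2 :=
  Fin.natAdd_lt_natAdd_iff n₁

@[simp] lemma leftSq_snd_lt_rightSq_snd (p : Fin m × Fin n₁) (q : Fin m × Fin n₂) :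
    (leftSq n₂ p).2 < (rightSq n₁ q).2 := by
  simp only [leftSq, rightSq, Fin.lt_def, Fin.val_castAdd, Fin.val_natAdd]
  omega

@[simp] lemma not_rightSq_snd_lt_leftSq_snd (p : Fin m × Fin n₁) (q : Fin m × Fin n₂) :
    ¬ (rightSq n₁ q).2 < (leftSq n₂ p).2 :=
  (leftSq_snd_lt_rightSq_snd p q).not_gt

@[simp] lemma rlt_leftSq_leftSq {p q : Fin m × Fin n₁} :
    rlt (leftSq n₂ p) (leftSq n₂ q) ↔ rlt p q := by
  simp only [rlt, leftSq_fst, leftSq_snd_lt_leftSq_snd]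

@[simp] lemma rlt_rightSq_rightSq {p q : Fin m × Fin n₂} :
    rlt (rightSq n₁ p) (rightSq n₁ q) ↔ rlt p q := by
  simp only [rlt, rightSq_fst, rightSq_snd_lt_rightSq_snd]

@[simp] lemma rlt_leftSq_rightSq {p : Fin m × Fin n₁} {q : Fin m × Fin n₂} :
    rlt (leftSq n₂ p) (rightSq n₁ q) ↔ p.1 ≤ q.1 := by
  simp only [rlt, leftSq_fst, rightSq_fst, leftSq_snd_lt_rightSq_snd, and_true]
  exact le_iff_lt_or_eq.symm

@[simp] lemma rlt_rightSq_leftSq {p : Fin m × Fin n₂} {q : Fin m × Fin n₁} :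
    rlt (rightSq n₁ p) (leftSq n₂ q) ↔ p.1 < q.1 := by
  simp only [rlt, leftSq_fst, rightSq_fst, not_rightSq_snd_lt_leftSq_snd, and_false, or_false]

lemma invV_starPart (V : Finset (Fin m × Fin n₁)) (V' : Finset (Fin m × Fin n₂)) :
    invV (starPart V V') = invV V + invV V'
      + #((V' ×ˢ V).filter fun pq => pq.1.1 < pq.2.1) := by
  rw [invV, card_filter_starPart_product]
  simp only [rlt_leftSq_leftSq, rlt_rightSq_rightSq, rlt_rightSq_leftSq, leftSq_fst, rightSq_fst,
    leftSq_snd_lt_leftSq_snd, rightSq_snd_lt_rightSq_snd, not_rightSq_snd_lt_leftSq_snd,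
    leftSq_snd_lt_rightSq_snd, and_false, and_true, and_self, filter_false, card_empty, add_zero]
  rw [invV, invV]
  ring

lemma invMix_starPart (V H : Finset (Fin m × Fin n₁)) (V' H' : Finset (Fin m × Fin n₂)) :
    invMix (starPart V V') (starPart H H') = invMix V H + invMix V' H'
      + #((H ×ˢ V').filter fun pq => pq.1.1 ≤ pq.2.1)
      + #((H' ×ˢ V).filter fun pq => pq.1.1 < pq.2.1) := by
  rw [invMix, card_filter_starPart_product]
  simp only [rlt_leftSq_leftSq, rlt_rightSq_rightSq, rlt_leftSq_rightSq, rlt_rightSq_leftSq]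
  rw [invMix, invMix]
  ring

lemma natCast_card_filter_rows {a b : ℕ} (A : Finset (Fin m × Fin a))
    (B : Finset (Fin m × Fin b)) (r : Fin m → Fin m → Prop) [DecidableRel r] :
    (#((A ×ˢ B).filter fun pq => r pq.1.1 pq.2.1) : ZMod 2)
      = ∑ ij ∈ univ.filter (fun ij : Fin m × Fin m => r ij.1 ij.2),
          excess B ij.2 * excess A ij.1 := by
  rw [card_eq_sum_card_fiberwise (f := fun pq => (pq.1.1, pq.2.1))
    (t := univ.filter fun ij : Fin m × Fin m => r ij.1 ij.2) (fun pq hpq => by simp_all)]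
  push_cast
  refine sum_congr rfl fun ij hij => ?_
  have fiber : ((A ×ˢ B).filter fun pq => r pq.1.1 pq.2.1).filter
      (fun pq => (pq.1.1, pq.2.1) = ij) = A.filter (·.1 = ij.1) ×ˢ B.filter (·.1 = ij.2) := by
    ext ⟨p, q⟩
    simp only [mem_filter, mem_univ, true_and] at hij
    simp only [mem_filter, mem_product, Prod.ext_iff]
    constructor
    · rintro ⟨⟨⟨hp, hq⟩, -⟩, hi, hj⟩
      exact ⟨⟨hp, hi⟩, hq, hj⟩
    · rintro ⟨⟨hp, hi⟩, hq, hj⟩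
      exact ⟨⟨⟨hp, hq⟩, hi ▸ hj ▸ hij⟩, hi, hj⟩
  rw [fiber, card_product, Nat.cast_mul, mul_comm]
  rfl

lemma sgnVH_starPart (V H : Finset (Fin m × Fin n₁)) (V' H' : Finset (Fin m × Fin n₂))
    (hV : ∑ i, excess V i = 0) (hV' : ∑ i, excess V' i = 0) :
    sgnVH (starPart V V') (starPart H H')
      = sgnVH V H * sgnVH V' H' * (-1) ^ Ex.expo (fEx V H hV) (fEx V' H' hV') := by
  rw [sgnVH, sgnVH, sgnVH, invV_starPart, invMix_starPart, ← pow_add, ← pow_add,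
    Ex.neg_one_pow_nat, Ex.neg_one_pow_nat]
  congr 1
  push_cast
  rw [Ex.expo_cast, natCast_card_filter_rows, natCast_card_filter_rows, natCast_card_filter_rows]
  simp only [Ex.Bf, fEx, mul_add, sum_add_distrib]
  ring

end Concatenation

open Ex in
theorem fEx_star_general (m n₁ n₂ : ℕ)
    (V H : Finset (Fin m × Fin n₁)) (V' H' : Finset (Fin m × Fin n₂))
    (h1 : ∑ i, excess V i = 0) (h2 : ∑ i, excess V' i = 0)
    (h3 : ∑ i, excess (starPart V V') i = 0) :
    fEx (starPart V V') (starPart H H') h3 = mul' (fEx V H h1) (fEx V' H' h2) :=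
  Ex.ext (excess_starPart V V') (excess_starPart H H') (sgnVH_starPart V H V' H' h1 h2)

open Ex in
/-- If `(V,H)` and `(V',H')` are decompositions of the `m×n₁`
diagram `C` and the `m×n₂` diagram `C'` respectively, and `(V'',H'') = (V,H) ⋆
(V',H')` is the induced decomposition of `C ⋆ C'`, then
`f(V'',H'') = f(V,H) · f(V',H')` in `Ex_m`. -/
theorem fEx_star (m n₁ n₂ : ℕ) (C : Diagram m n₁) (C' : Diagram m n₂)
    (V H : Finset (Fin m × Fin n₁)) (V' H' : Finset (Fin m × Fin n₂))
    (hd : IsDecomp C V H) (hd' : IsDecomp C' V' H')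
    (h1 : ∑ i, excess V i = 0) (h2 : ∑ i, excess V' i = 0)
    (h3 : ∑ i, excess (starPart V V') i = 0) :
    fEx (starPart V V') (starPart H H') h3 = mul' (fEx V H h1) (fEx V' H' h2) :=
  fEx_star_general m n₁ n₂ V H V' H' h1 h2 h3
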